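/- Consider the weighted maximum likelihood estimator of the ARP transition function from off-policy data: P̂_n(z,z') = (Σ_{i,t} 1{φ(S_t^i)=z, φ(S_{t+1}^i)=z'} ρ_{0:t}^i) / (Σ_{i,t} 1{φ(S_t^i)=z} ρ_{0:t}^i), where trajectories are i.i.d. under π_b and ρ_{0:t}^i = Π_{j=0}^t π_e(S_j^i,A_j^i)/π_b(S_j^i,A_j^i). Under the support assumption (π_b(s,a)=0 ⇒ π_e(s,a)=0) and if Σ_t Pr(φ(S_t)=z; π_e) ≠ 0, then P̂_n(z,z') converges almost surely to P_φ^{π_e}(z,z') = (Σ_t Pr(φ(S_t)=z, φ(S_{t+1})=z'; π_e)) / (Σ_t Pr(φ(S_t)=z; π_e)). -/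

import Mathlib

/-!
Multiplying the `π_b`-probability of a trajectory by `ρ_{0:t}` gives its probability under the
policy that plays `π_e` up to step `t` and `π_b` afterwards; the support assumption makes this
exact where `π_b` vanishes. A test function of the states up to time `t + 1` does not see the
later steps, which sum out, so its `ρ_{0:t}`-weighted `π_b`-expectation is its
`π_e`-expectation. By the strong law of large numbers the numerator and the denominator of the
estimator, divided by `n`, converge almost surely to these expectations, and the limit of the
denominator is nonzero.
-/

open Finset MeasureTheory Filter Topology

/-- Probability of a trajectory prefix `(S_0, A_0, S_1, ..., A_{t-1}, S_t)` of a finite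
MDP `(S, A, p, r, η)` under a stationary policy `π`. -/
def trajProb {S A : Type*} [Fintype A] (η : S → ℝ) (p : S → A → S → ℝ) (π : S → A → ℝ)
    (t : ℕ) (s : Fin (t + 1) → S) (a : Fin t → A) : ℝ :=
  η (s 0) * ∏ j : Fin t, (π (s j.castSucc) (a j) * p (s j.castSucc) (a j) (s j.succ))

/-- The importance weight `ρ_{0:t} = Π_{j=0}^t π_e(S_j,A_j)/π_b(S_j,A_j)` of a trajectory
of horizon `T`, for `t : Fin (T+1)`. -/
noncomputable def isWeight {S A : Type*} (πb πe : S → A → ℝ) (T : ℕ)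
    (h : (Fin (T + 2) → S) × (Fin (T + 1) → A)) (t : Fin (T + 1)) : ℝ :=
  ∏ j : Fin (T + 1),
    if (j : ℕ) ≤ (t : ℕ) then πe (h.1 j.castSucc) (h.2 j) / πb (h.1 j.castSucc) (h.2 j)
    else 1

theorem Fin.snoc_apply_of_lt {X : Type*} {m : ℕ} (f : Fin m → X) (x : X) {j : Fin (m + 1)}
    (hj : (j : ℕ) < m) : (Fin.snoc f x : Fin (m + 1) → X) j = f (j.castLT hj) := by
  simp [Fin.snoc, hj]

theorem sum_tuple_succ_eq_sum_sum_snoc {X M : Type*} [Fintype X] [AddCommMonoid M] {m : ℕ}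
    (F : (Fin (m + 1) → X) → M) : ∑ s, F s = ∑ s : Fin m → X, ∑ x, F (Fin.snoc s x) := by
  rw [← (Fin.snocEquiv fun _ => X).sum_comp, Fintype.sum_prod_type, sum_comm]
  rfl

def nonstationaryTrajProb {S A : Type*} (η : S → ℝ) (p : S → A → S → ℝ) (n : ℕ)
    (π : Fin n → S → A → ℝ) (s : Fin (n + 1) → S) (a : Fin n → A) : ℝ :=
  η (s 0) * ∏ j : Fin n, (π j (s j.castSucc) (a j) * p (s j.castSucc) (a j) (s j.succ))

section NonstationaryTrajProb

variable {S A : Type*} (η : S → ℝ) (p : S → A → S → ℝ)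

theorem nonstationaryTrajProb_snoc {m : ℕ} (π : Fin (m + 1) → S → A → ℝ)
    (s : Fin (m + 1) → S) (x : S) (a : Fin m → A) (b : A) :
    nonstationaryTrajProb η p (m + 1) π (Fin.snoc s x) (Fin.snoc a b)
      = nonstationaryTrajProb η p m (fun j => π j.castSucc) s a
          * (π (Fin.last m) (s (Fin.last m)) b * p (s (Fin.last m)) b x) := by
  have h0 : (Fin.snoc s x : Fin (m + 2) → S) 0 = s 0 := Fin.snoc_castSucc (i := 0) ..
  simp only [nonstationaryTrajProb, Fin.prod_univ_castSucc, Fin.succ_castSucc, Fin.snoc_castSucc,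
    Fin.succ_last, Fin.snoc_last, h0, mul_assoc]

variable [Fintype S] [Fintype A]

theorem sum_nonstationaryTrajProb_mul_comp_init (hp : ∀ s a, ∑ s', p s a s' = 1) {m : ℕ}
    (π : Fin (m + 1) → S → A → ℝ) (hπ : ∀ s, ∑ b, π (Fin.last m) s b = 1)
    (χ : (Fin (m + 1) → S) → ℝ) :
    ∑ s : Fin (m + 2) → S, ∑ a : Fin (m + 1) → A,
        nonstationaryTrajProb η p (m + 1) π s a * χ (Fin.init s)
      = ∑ s, ∑ a, nonstationaryTrajProb η p m (fun j => π j.castSucc) s a * χ s := by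
  rw [sum_tuple_succ_eq_sum_sum_snoc]
  refine sum_congr rfl fun s _ => ?_
  rw [sum_comm, sum_tuple_succ_eq_sum_sum_snoc]
  refine sum_congr rfl fun a _ => ?_
  have hfactor : ∀ b x, nonstationaryTrajProb η p m (fun j => π j.castSucc) s a
      * (π (Fin.last m) (s (Fin.last m)) b * p (s (Fin.last m)) b x) * χ s
      = nonstationaryTrajProb η p m (fun j => π j.castSucc) s a * χ s
        * π (Fin.last m) (s (Fin.last m)) b * p (s (Fin.last m)) b x := fun _ _ => by ring
  simp only [nonstationaryTrajProb_snoc, Fin.init_snoc, hfactor, ← mul_sum, hp, hπ, mul_one]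

theorem sum_nonstationaryTrajProb_mul_eq_of_eqOn_prefix (hp : ∀ s a, ∑ s', p s a s' = 1)
    {n k : ℕ} {π π' : Fin n → S → A → ℝ} (hπ : ∀ j s, ∑ b, π j s b = 1)
    (hπ' : ∀ j s, ∑ b, π' j s b = 1) (hππ' : ∀ j : Fin n, (j : ℕ) < k → π j = π' j)
    {χ : (Fin (n + 1) → S) → ℝ}
    (hχ : ∀ s s', (∀ j : Fin (n + 1), (j : ℕ) ≤ k → s j = s' j) → χ s = χ s') :
    ∑ s, ∑ a, nonstationaryTrajProb η p n π s a * χ s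
      = ∑ s, ∑ a, nonstationaryTrajProb η p n π' s a * χ s := by
  induction n with
  | zero => rw [Subsingleton.elim π π']
  | succ m ih =>
    rcases le_or_gt (m + 1) k with hmk | hkm
    · rw [funext fun j => hππ' j (by omega)]
    -- `χ` ignores the last state, so the last transition can be summed out on both sides.
    set χ' : (Fin (m + 1) → S) → ℝ := fun s => χ (Fin.snoc s (s (Fin.last m)))
    have hχχ' : ∀ s, χ s = χ' (Fin.init s) := fun s =>
      hχ _ _ fun j hj => by
        simp [Fin.snoc_apply_of_lt _ _ (show (j : ℕ) < m + 1 by omega), Fin.init]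
    have hχ' : ∀ s s', (∀ j : Fin (m + 1), (j : ℕ) ≤ k → s j = s' j) → χ' s = χ' s' :=
      fun s s' hss' => hχ _ _ fun j hj => by
        simp only [Fin.snoc_apply_of_lt _ _ (show (j : ℕ) < m + 1 by omega)]
        exact hss' _ hj
    simp only [hχχ']
    rw [sum_nonstationaryTrajProb_mul_comp_init η p hp π (hπ _),
      sum_nonstationaryTrajProb_mul_comp_init η p hp π' (hπ' _)]
    exact ih (fun j => hπ _) (fun j => hπ' _) (fun j hj => hππ' _ hj) hχ'

end NonstationaryTrajProb

section ImportanceSampling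

variable {S A : Type*} (η : S → ℝ) (p : S → A → S → ℝ) {πb πe : S → A → ℝ} {T : ℕ}

theorem trajProb_mul_isWeight [Fintype A] (hsupp : ∀ s a, πb s a = 0 → πe s a = 0)
    (h : (Fin (T + 2) → S) × (Fin (T + 1) → A)) (t : Fin (T + 1)) :
    trajProb η p πb (T + 1) h.1 h.2 * isWeight πb πe T h t
      = nonstationaryTrajProb η p (T + 1) (fun j => if (j : ℕ) ≤ t then πe else πb) h.1 h.2 := by
  rw [trajProb, nonstationaryTrajProb, isWeight, mul_assoc, ← prod_mul_distrib]
  congr 1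
  refine prod_congr rfl fun j _ => ?_
  split_ifs
  · by_cases hb : πb (h.1 j.castSucc) (h.2 j) = 0
    · simp [hb, hsupp _ _ hb]
    · field_simp
  · simp

variable [Fintype S] [Fintype A]

theorem sum_trajProb_mul_isWeight (hp : ∀ s a, ∑ s', p s a s' = 1)
    (hπb : ∀ s, ∑ a, πb s a = 1) (hπe : ∀ s, ∑ a, πe s a = 1)
    (hsupp : ∀ s a, πb s a = 0 → πe s a = 0) (t : Fin (T + 1)) {χ : (Fin (T + 2) → S) → ℝ}
    (hχ : ∀ s s', (∀ j : Fin (T + 2), (j : ℕ) ≤ t + 1 → s j = s' j) → χ s = χ s') :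
    ∑ h : (Fin (T + 2) → S) × (Fin (T + 1) → A),
        trajProb η p πb (T + 1) h.1 h.2 * (χ h.1 * isWeight πb πe T h t)
      = ∑ h : (Fin (T + 2) → S) × (Fin (T + 1) → A),
          trajProb η p πe (T + 1) h.1 h.2 * χ h.1 := by
  have hweight h : trajProb η p πb (T + 1) h.1 h.2 * (χ h.1 * isWeight πb πe T h t)
      = nonstationaryTrajProb η p (T + 1) (fun j => if (j : ℕ) ≤ t then πe else πb) h.1 h.2
        * χ h.1 := by
    rw [← trajProb_mul_isWeight η p hsupp]
    ring
  rw [sum_congr rfl fun h _ => hweight h, Fintype.sum_prod_type, Fintype.sum_prod_type]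
  refine sum_nonstationaryTrajProb_mul_eq_of_eqOn_prefix η p hp (π' := fun _ => πe)
    (fun j s => by split_ifs <;> simp [hπe, hπb]) (fun _ => hπe) (fun j hj => ?_) hχ
  simp [Nat.lt_succ_iff.mp hj]

theorem sum_trajProb_mul_sum_isWeight (hp : ∀ s a, ∑ s', p s a s' = 1)
    (hπb : ∀ s, ∑ a, πb s a = 1) (hπe : ∀ s, ∑ a, πe s a = 1)
    (hsupp : ∀ s a, πb s a = 0 → πe s a = 0) {g : Fin (T + 1) → (Fin (T + 2) → S) → ℝ}
    (hg : ∀ (t : Fin (T + 1)) s s',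
      (∀ j : Fin (T + 2), (j : ℕ) ≤ t + 1 → s j = s' j) → g t s = g t s') :
    ∑ h : (Fin (T + 2) → S) × (Fin (T + 1) → A),
        trajProb η p πb (T + 1) h.1 h.2 * ∑ t, g t h.1 * isWeight πb πe T h t
      = ∑ h : (Fin (T + 2) → S) × (Fin (T + 1) → A),
          trajProb η p πe (T + 1) h.1 h.2 * ∑ t, g t h.1 := by
  simp only [mul_sum]
  rw [sum_comm]
  conv_rhs => rw [sum_comm]
  exact sum_congr rfl fun t _ => sum_trajProb_mul_isWeight η p hp hπb hπe hsupp t (hg t)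

end ImportanceSampling

section Probability

open BoundedContinuousFunction

variable {Ω ι : Type*} [MeasurableSpace Ω] {μ : Measure Ω} [Fintype ι]

theorem integrable_comp_of_integral_comp_eq_sum [IsProbabilityMeasure μ] {Y : Ω → ι}
    {w : ι → ℝ} (hY : ∀ f : ι → ℝ, ∫ ω, f (Y ω) ∂μ = ∑ x, w x * f x) (f : ι → ℝ) :
    Integrable (fun ω => f (Y ω)) μ := by
  have hw : ∑ x, w x = 1 := by simpa using (hY fun _ => 1).symm
  -- Shifting `f` by a constant makes the integral `1`, and the Bochner integral of a
  -- non-integrable function is `0`.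
  set c := 1 - ∑ x, w x * f x
  refine (integrable_add_const_iff (c := c)).mp (.of_integral_ne_zero ?_)
  rw [hY fun x => f x + c]
  simp only [mul_add, sum_add_distrib, ← sum_mul, hw, c]
  norm_num

theorem identDistrib_of_forall_integral_eq {Ω' E : Type*} [MeasurableSpace Ω']
    {ν : Measure Ω'} [IsFiniteMeasure μ] [IsFiniteMeasure ν] [TopologicalSpace E]
    [MeasurableSpace E] [HasOuterApproxClosed E] [BorelSpace E] {X : Ω → E} {X' : Ω' → E}
    (hX : AEMeasurable X μ) (hX' : AEMeasurable X' ν)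
    (h : ∀ g : E →ᵇ ℝ, ∫ ω, g (X ω) ∂μ = ∫ ω, g (X' ω) ∂ν) :
    ProbabilityTheory.IdentDistrib X X' μ ν := by
  refine ⟨hX, hX', ext_of_forall_integral_eq_of_IsFiniteMeasure fun g => ?_⟩
  rw [integral_map hX g.continuous.aestronglyMeasurable,
    integral_map hX' g.continuous.aestronglyMeasurable]
  exact h g

theorem strong_law_comp_of_integral_comp_eq_sum [IsProbabilityMeasure μ] {H : ℕ → Ω → ι}
    (hindep : ProbabilityTheory.iIndepFun (m := fun _ => ⊤) H μ) {w : ι → ℝ}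
    (hH : ∀ i (f : ι → ℝ), ∫ ω, f (H i ω) ∂μ = ∑ x, w x * f x) (f : ι → ℝ) :
    ∀ᵐ ω ∂μ, Tendsto (fun n : ℕ => (∑ i ∈ range n, f (H i ω)) / n) atTop
      (𝓝 (∑ x, w x * f x)) := by
  have hint i := integrable_comp_of_integral_comp_eq_sum (hH i) f
  rw [← hH 0 f]
  refine ProbabilityTheory.strong_law_ae_real (fun i ω => f (H i ω)) (hint 0)
    (fun i j hij => (hindep.indepFun hij).comp measurable_from_top measurable_from_top)
    fun i => identDistrib_of_forall_integral_eq (hint i).aemeasurable (hint 0).aemeasurable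
      fun g => ?_
  rw [hH i (fun x => g (f x)), hH 0 (fun x => g (f x))]

theorem Filter.Tendsto.div_of_tendsto_div_natCast {u v : ℕ → ℝ} {a b : ℝ}
    (hu : Tendsto (fun n : ℕ => u n / n) atTop (𝓝 a))
    (hv : Tendsto (fun n : ℕ => v n / n) atTop (𝓝 b)) (hb : b ≠ 0) :
    Tendsto (fun n => u n / v n) atTop (𝓝 (a / b)) := by
  refine (hu.div hv hb).congr' ?_
  filter_upwards [eventually_ne_atTop 0] with n hn
  exact div_div_div_cancel_right₀ (Nat.cast_ne_zero.mpr hn) (u n) (v n)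

end Probability

theorem weighted_mle_abstract_transition_consistent_general
    {S A Z : Type*} [Fintype S] [Fintype A] [DecidableEq Z]
    {Ω : Type*} [MeasurableSpace Ω] (μ : Measure Ω) [IsProbabilityMeasure μ]
    (η : S → ℝ) (p : S → A → S → ℝ) (πb πe : S → A → ℝ) (T : ℕ)
    (hp1 : ∀ s a, ∑ s', p s a s' = 1)
    (hπb1 : ∀ s, ∑ a, πb s a = 1)
    (hπe1 : ∀ s, ∑ a, πe s a = 1)
    (hsupp : ∀ s a, πb s a = 0 → πe s a = 0)
    (φ : S → Z)
    -- i.i.d. trajectories generated by the behavior policy `π_b`: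
    (H : ℕ → Ω → (Fin (T + 2) → S) × (Fin (T + 1) → A))
    (hindep : ProbabilityTheory.iIndepFun
      (m := fun _ : ℕ => (⊤ : MeasurableSpace ((Fin (T + 2) → S) × (Fin (T + 1) → A)))) H μ)
    (hlaw : ∀ (i : ℕ) (f : (Fin (T + 2) → S) × (Fin (T + 1) → A) → ℝ),
      ∫ ω, f (H i ω) ∂μ
        = ∑ h : (Fin (T + 2) → S) × (Fin (T + 1) → A),
            trajProb η p πb (T + 1) h.1 h.2 * f h)
    (z z' : Z)
    -- `Σ_t Pr(φ(S_t)=z; π_e) ≠ 0`: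
    (hden : (∑ h : (Fin (T + 2) → S) × (Fin (T + 1) → A),
        trajProb η p πe (T + 1) h.1 h.2 *
          (∑ t : Fin (T + 1), if φ (h.1 t.castSucc) = z then (1 : ℝ) else 0)) ≠ 0) :
    ∀ᵐ ω ∂μ, Tendsto (fun n =>
        (∑ i ∈ Finset.range n, ∑ t : Fin (T + 1),
            (if φ ((H i ω).1 t.castSucc) = z ∧ φ ((H i ω).1 t.succ) = z' then (1 : ℝ) else 0) *
              isWeight πb πe T (H i ω) t) /
          (∑ i ∈ Finset.range n, ∑ t : Fin (T + 1),
            (if φ ((H i ω).1 t.castSucc) = z then (1 : ℝ) else 0) *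
              isWeight πb πe T (H i ω) t))
      atTop (𝓝 (
        (∑ h : (Fin (T + 2) → S) × (Fin (T + 1) → A),
            trajProb η p πe (T + 1) h.1 h.2 *
              (∑ t : Fin (T + 1),
                if φ (h.1 t.castSucc) = z ∧ φ (h.1 t.succ) = z' then (1 : ℝ) else 0)) /
          (∑ h : (Fin (T + 2) → S) × (Fin (T + 1) → A),
            trajProb η p πe (T + 1) h.1 h.2 *
              (∑ t : Fin (T + 1), if φ (h.1 t.castSucc) = z then (1 : ℝ) else 0)))) := by
  have hnum := strong_law_comp_of_integral_comp_eq_sum hindep hlaw fun h => ∑ t : Fin (T + 1),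
    (if φ (h.1 t.castSucc) = z ∧ φ (h.1 t.succ) = z' then (1 : ℝ) else 0) * isWeight πb πe T h t
  have hvisits := strong_law_comp_of_integral_comp_eq_sum hindep hlaw fun h => ∑ t : Fin (T + 1),
    (if φ (h.1 t.castSucc) = z then (1 : ℝ) else 0) * isWeight πb πe T h t
  rw [sum_trajProb_mul_sum_isWeight η p hp1 hπb1 hπe1 hsupp
    (g := fun t s => if φ (s t.castSucc) = z ∧ φ (s t.succ) = z' then 1 else 0)
    fun t s s' hss' => by simp only [hss' t.castSucc (by simp), hss' t.succ (by simp)]] at hnum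
  rw [sum_trajProb_mul_sum_isWeight η p hp1 hπb1 hπe1 hsupp
    (g := fun t s => if φ (s t.castSucc) = z then 1 else 0)
    fun t s s' hss' => by simp only [hss' t.castSucc (by simp)]] at hvisits
  filter_upwards [hnum, hvisits] with ω hnum hvisits
  exact hnum.div_of_tendsto_div_natCast hvisits hden

/-- Strong consistency of the weighted maximum likelihood (off-policy)
ARP transition estimator: with i.i.d. trajectories under `π_b`, importance weights
`ρ_{0:t}^i`, the support assumption `π_b(s,a)=0 → π_e(s,a)=0`, and
`Σ_t Pr(φ(S_t)=z; π_e) ≠ 0`, the estimator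
`P̂_n(z,z') = (Σ_{i,t} 1{φ(S_t^i)=z, φ(S_{t+1}^i)=z'} ρ_{0:t}^i) / (Σ_{i,t} 1{φ(S_t^i)=z} ρ_{0:t}^i)`
converges almost surely to
`P_φ^{π_e}(z,z') = (Σ_t Pr(φ(S_t)=z, φ(S_{t+1})=z'; π_e)) / (Σ_t Pr(φ(S_t)=z; π_e))`. -/
theorem weighted_mle_abstract_transition_consistent
    {S A Z : Type*} [Fintype S] [Fintype A] [DecidableEq Z]
    {Ω : Type*} [MeasurableSpace Ω] (μ : Measure Ω) [IsProbabilityMeasure μ]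
    (η : S → ℝ) (p : S → A → S → ℝ) (πb πe : S → A → ℝ) (T : ℕ)
    (hη0 : ∀ s, 0 ≤ η s) (hη1 : ∑ s, η s = 1)
    (hp0 : ∀ s a s', 0 ≤ p s a s') (hp1 : ∀ s a, ∑ s', p s a s' = 1)
    (hπb0 : ∀ s a, 0 ≤ πb s a) (hπb1 : ∀ s, ∑ a, πb s a = 1)
    (hπe0 : ∀ s a, 0 ≤ πe s a) (hπe1 : ∀ s, ∑ a, πe s a = 1)
    (hsupp : ∀ s a, πb s a = 0 → πe s a = 0)
    (φ : S → Z)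
    -- i.i.d. trajectories generated by the behavior policy `π_b`:
    (H : ℕ → Ω → (Fin (T + 2) → S) × (Fin (T + 1) → A))
    (hindep : ProbabilityTheory.iIndepFun
      (m := fun _ : ℕ => (⊤ : MeasurableSpace ((Fin (T + 2) → S) × (Fin (T + 1) → A)))) H μ)
    (hlaw : ∀ (i : ℕ) (f : (Fin (T + 2) → S) × (Fin (T + 1) → A) → ℝ),
      ∫ ω, f (H i ω) ∂μ
        = ∑ h : (Fin (T + 2) → S) × (Fin (T + 1) → A),
            trajProb η p πb (T + 1) h.1 h.2 * f h)
    (z z' : Z)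
    -- `Σ_t Pr(φ(S_t)=z; π_e) ≠ 0`:
    (hden : (∑ h : (Fin (T + 2) → S) × (Fin (T + 1) → A),
        trajProb η p πe (T + 1) h.1 h.2 *
          (∑ t : Fin (T + 1), if φ (h.1 t.castSucc) = z then (1 : ℝ) else 0)) ≠ 0) :
    ∀ᵐ ω ∂μ, Tendsto (fun n =>
        (∑ i ∈ Finset.range n, ∑ t : Fin (T + 1),
            (if φ ((H i ω).1 t.castSucc) = z ∧ φ ((H i ω).1 t.succ) = z' then (1 : ℝ) else 0) *
              isWeight πb πe T (H i ω) t) /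
          (∑ i ∈ Finset.range n, ∑ t : Fin (T + 1),
            (if φ ((H i ω).1 t.castSucc) = z then (1 : ℝ) else 0) *
              isWeight πb πe T (H i ω) t))
      atTop (𝓝 (
        (∑ h : (Fin (T + 2) → S) × (Fin (T + 1) → A),
            trajProb η p πe (T + 1) h.1 h.2 *
              (∑ t : Fin (T + 1),
                if φ (h.1 t.castSucc) = z ∧ φ (h.1 t.succ) = z' then (1 : ℝ) else 0)) /
          (∑ h : (Fin (T + 2) → S) × (Fin (T + 1) → A),
            trajProb η p πe (T + 1) h.1 h.2 *
              (∑ t : Fin (T + 1), if φ (h.1 t.castSucc) = z then (1 : ℝ) else 0)))) :=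
  weighted_mle_abstract_transition_consistent_general μ η p πb πe T hp1 hπb1 hπe1 hsupp φ H hindep
    hlaw z z' hden
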